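/- arXiv:2603.05814 — 2 statements merged into one kernel-verified Lean document; each statement's English description precedes it below -/
import Mathlib

section
/- (Dai–Yuan sufficient descent) Consider the conjugate gradient iteration in which each t_k satisfies the strong Wolfe conditions at x^k along d^k, and suppose that for every k ≥ 1: β_k ≥ 0 and β_k·(ψ_{x^k}(d^{k−1}) − ψ_{x^{k−1}}(d^{k−1})) ≤ −ψ_{x^k}(v(x^k)) (i.e., β_k is at most the Dai–Yuan parameter β_k^{DY} := −ψ_{x^k}(v(x^k)) / (ψ_{x^k}(d^{k−1}) − ψ_{x^{k−1}}(d^{k−1})), whose denominator is positive). Then for all k ≥ 0, ψ_{x^k}(d^k) ≤ (1/(1+σ))·ψ_{x^k}(v(x^k)) < 0; i.e., the sufficient descent condition holds with c = 1/(1+σ). -/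
/-!
The scalarization `ψ_x` is a maximum of sublinear functions (the weights `g̅ - g̲` of `|v|` are
nonnegative), so it is sublinear and vanishes at `0`; minimality of `v` against `w = 0` then gives
`ψ(v) + ‖v‖²/2 ≤ 0`, so `ψ(v) < 0`. Write `a = ψ_{x^{k+1}}(v^{k+1})`, `p = ψ_{x^k}(d^k)` and
`q = ψ_{x^{k+1}}(d^k)`. Sublinearity gives `ψ_{x^{k+1}}(d^{k+1}) ≤ a + βq`. Inductively `p < 0`,
so the strong Wolfe condition reads `q ≤ -σp`, i.e. `(1 + σ)q ≤ σ(q - p)`; with the Dai–Yuan bound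
`β(q - p) ≤ -a` this yields `(1 + σ)βq ≤ -σa`, which is `a + βq ≤ a / (1 + σ)`.
-/

open scoped BigOperators

noncomputable def pd (n : ℕ) (F : EuclideanSpace ℝ (Fin n) → ℝ)
    (x : EuclideanSpace ℝ (Fin n)) (j : Fin n) : ℝ :=
  fderiv ℝ F x (EuclideanSpace.single j (1 : ℝ))

noncomputable def glo (n : ℕ) (F H : EuclideanSpace ℝ (Fin n) → ℝ)
    (x : EuclideanSpace ℝ (Fin n)) (j : Fin n) : ℝ :=
  min (pd n F x j) (pd n H x j)

noncomputable def ghi (n : ℕ) (F H : EuclideanSpace ℝ (Fin n) → ℝ)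
    (x : EuclideanSpace ℝ (Fin n)) (j : Fin n) : ℝ :=
  max (pd n F x j) (pd n H x j)

noncomputable def gloVec (n : ℕ) (F H : EuclideanSpace ℝ (Fin n) → ℝ)
    (x : EuclideanSpace ℝ (Fin n)) : EuclideanSpace ℝ (Fin n) :=
  WithLp.toLp 2 (fun j => glo n F H x j)

noncomputable def ghiVec (n : ℕ) (F H : EuclideanSpace ℝ (Fin n) → ℝ)
    (x : EuclideanSpace ℝ (Fin n)) : EuclideanSpace ℝ (Fin n) :=
  WithLp.toLp 2 (fun j => ghi n F H x j)

noncomputable def psi (m n : ℕ) (Gl Gu : Fin m → EuclideanSpace ℝ (Fin n) → ℝ)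
    (x v : EuclideanSpace ℝ (Fin n)) : ℝ :=
  ⨆ i : Fin m, (1 / 2 : ℝ) *
    ((∑ j : Fin n, (glo n (Gl i) (Gu i) x j + ghi n (Gl i) (Gu i) x j) * v j) +
     (∑ j : Fin n, (ghi n (Gl i) (Gu i) x j - glo n (Gl i) (Gu i) x j) * |v j|))

def LevelSet (m n : ℕ) (Gl Gu : Fin m → EuclideanSpace ℝ (Fin n) → ℝ)
    (x0 : EuclideanSpace ℝ (Fin n)) : Set (EuclideanSpace ℝ (Fin n)) :=
  {x | ∀ i : Fin m, Gl i x ≤ Gl i x0 ∧ Gu i x ≤ Gu i x0}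

def StdWolfe (m n : ℕ) (Gl Gu : Fin m → EuclideanSpace ℝ (Fin n) → ℝ)
    (ρ σ : ℝ) (x d : EuclideanSpace ℝ (Fin n)) (t : ℝ) : Prop :=
  (∀ i : Fin m,
      Gl i (x + t • d) ≤ Gl i x + ρ * t * psi m n Gl Gu x d ∧
      Gu i (x + t • d) ≤ Gu i x + ρ * t * psi m n Gl Gu x d) ∧
  σ * psi m n Gl Gu x d ≤ psi m n Gl Gu (x + t • d) d

def StrongWolfe (m n : ℕ) (Gl Gu : Fin m → EuclideanSpace ℝ (Fin n) → ℝ)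
    (ρ σ : ℝ) (x d : EuclideanSpace ℝ (Fin n)) (t : ℝ) : Prop :=
  (∀ i : Fin m,
      Gl i (x + t • d) ≤ Gl i x + ρ * t * psi m n Gl Gu x d ∧
      Gu i (x + t • d) ≤ Gu i x + ρ * t * psi m n Gl Gu x d) ∧
  |psi m n Gl Gu (x + t • d) d| ≤ σ * |psi m n Gl Gu x d|

def AssumptionA1 (m n : ℕ) (Gl Gu : Fin m → EuclideanSpace ℝ (Fin n) → ℝ)
    (x0 : EuclideanSpace ℝ (Fin n)) : Prop :=
  ∀ i : Fin m, ∃ L : ℝ, 0 < L ∧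
    ∀ y ∈ LevelSet m n Gl Gu x0, ∀ z ∈ LevelSet m n Gl Gu x0,
      ‖gloVec n (Gl i) (Gu i) y - gloVec n (Gl i) (Gu i) z‖ ≤ L * ‖y - z‖ ∧
      ‖ghiVec n (Gl i) (Gu i) y - ghiVec n (Gl i) (Gu i) z‖ ≤ L * ‖y - z‖

def AssumptionA2 (m n : ℕ) (Gl Gu : Fin m → EuclideanSpace ℝ (Fin n) → ℝ)
    (x0 : EuclideanSpace ℝ (Fin n)) : Prop :=
  ∀ y : ℕ → EuclideanSpace ℝ (Fin n),
    (∀ k, y k ∈ LevelSet m n Gl Gu x0) →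
    (∀ (i : Fin m) (k : ℕ), Gl i (y (k+1)) ≤ Gl i (y k) ∧ Gu i (y (k+1)) ≤ Gu i (y k)) →
    ∀ i : Fin m, (∃ Cl : ℝ, ∀ k, Cl ≤ Gl i (y k)) ∧ (∃ Cu : ℝ, ∀ k, Cu ≤ Gu i (y k))

section Scalarization

variable {m n : ℕ} {Gl Gu : Fin m → EuclideanSpace ℝ (Fin n) → ℝ}

lemma glo_le_ghi (F H : EuclideanSpace ℝ (Fin n) → ℝ) (x : EuclideanSpace ℝ (Fin n)) (j : Fin n) :
    glo n F H x j ≤ ghi n F H x j :=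
  min_le_max

lemma le_psi (x v : EuclideanSpace ℝ (Fin n)) (i : Fin m) :
    (1 / 2 : ℝ) *
      ((∑ j : Fin n, (glo n (Gl i) (Gu i) x j + ghi n (Gl i) (Gu i) x j) * v j) +
       (∑ j : Fin n, (ghi n (Gl i) (Gu i) x j - glo n (Gl i) (Gu i) x j) * |v j|))
      ≤ psi m n Gl Gu x v := by
  unfold psi
  apply le_ciSup (Set.finite_range _).bddAbove i

lemma psi_zero (x : EuclideanSpace ℝ (Fin n)) : psi m n Gl Gu x 0 = 0 := by
  simp [psi]

lemma sum_mul_add_sum_mul_abs_add_smul_le {ι : Type*} [Fintype ι] (A B u w : ι → ℝ) (hB : 0 ≤ B)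
    {c : ℝ} (hc : 0 ≤ c) :
    ∑ j, A j * (u j + c * w j) + ∑ j, B j * |u j + c * w j|
      ≤ (∑ j, A j * u j + ∑ j, B j * |u j|) + c * (∑ j, A j * w j + ∑ j, B j * |w j|) := by
  simp only [← Finset.sum_add_distrib, Finset.mul_sum]
  refine Finset.sum_le_sum fun j _ => ?_
  have habs : |u j + c * w j| ≤ |u j| + c * |w j| := by
    simpa [abs_mul, abs_of_nonneg hc] using abs_add_le (u j) (c * w j)
  nlinarith [mul_le_mul_of_nonneg_left habs (hB j)]

lemma psi_add_smul_le (x u w : EuclideanSpace ℝ (Fin n)) {c : ℝ} (hc : 0 ≤ c) :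
    psi m n Gl Gu x (u + c • w) ≤ psi m n Gl Gu x u + c * psi m n Gl Gu x w := by
  rcases isEmpty_or_nonempty (Fin m) with _ | _
  · simp [psi]
  refine ciSup_le fun i => ?_
  have hterm := sum_mul_add_sum_mul_abs_add_smul_le
    (fun j => glo n (Gl i) (Gu i) x j + ghi n (Gl i) (Gu i) x j)
    (fun j => ghi n (Gl i) (Gu i) x j - glo n (Gl i) (Gu i) x j) u w
    (fun j => sub_nonneg.mpr (glo_le_ghi _ _ x j)) hc
  calc _ ≤ _ := mul_le_mul_of_nonneg_left hterm (by norm_num)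
    _ ≤ _ := by
      rw [mul_add, ← mul_left_comm]
      exact add_le_add (le_psi x u i) (mul_le_mul_of_nonneg_left (le_psi x w i) hc)

lemma psi_neg_of_minimizer {y v : EuclideanSpace ℝ (Fin n)}
    (hmin : ∀ w, psi m n Gl Gu y v + (1/2) * ‖v‖^2 ≤ psi m n Gl Gu y w + (1/2) * ‖w‖^2)
    (hv : v ≠ 0) : psi m n Gl Gu y v < 0 := by
  have h := hmin 0
  have hpos : 0 < ‖v‖ := norm_pos_iff.mpr hv
  simp only [psi_zero, norm_zero] at h
  nlinarith

end Scalarization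

lemma dy_descent_step {a p q β σ : ℝ} (hσ : 0 ≤ σ) (hβ : 0 ≤ β) (hq : q ≤ -(σ * p))
    (hβq : β * (q - p) ≤ -a) : a + β * q ≤ 1 / (1 + σ) * a := by
  rw [one_div_mul_eq_div, le_div_iff₀ (by linarith)]
  nlinarith [mul_le_mul_of_nonneg_left hq hβ, mul_le_mul_of_nonneg_left hβq hσ]

theorem dy_sufficient_descent_general (m n : ℕ)
    (Gl Gu : Fin m → EuclideanSpace ℝ (Fin n) → ℝ)
    (vv : EuclideanSpace ℝ (Fin n) → EuclideanSpace ℝ (Fin n))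
    (hvmin : ∀ y w : EuclideanSpace ℝ (Fin n),
      psi m n Gl Gu y (vv y) + (1/2) * ‖vv y‖^2 ≤ psi m n Gl Gu y w + (1/2) * ‖w‖^2)
    (ρ σ : ℝ) (hρ : 0 < ρ) (hρσ : ρ < σ)
    (x d : ℕ → EuclideanSpace ℝ (Fin n)) (t : ℕ → ℝ) (β : ℕ → ℝ)
    (hx : ∀ k : ℕ, x (k+1) = x k + t k • d k)
    (hd0 : d 0 = vv (x 0))
    (hdk : ∀ k : ℕ, d (k+1) = vv (x (k+1)) + β (k+1) • d k)
    (hvne : ∀ k : ℕ, vv (x k) ≠ 0)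
    (hw : ∀ k : ℕ, StrongWolfe m n Gl Gu ρ σ (x k) (d k) (t k))
    (hβ : ∀ k : ℕ, 0 ≤ β (k+1) ∧
      β (k+1) * (psi m n Gl Gu (x (k+1)) (d k) - psi m n Gl Gu (x k) (d k))
        ≤ -psi m n Gl Gu (x (k+1)) (vv (x (k+1)))) :
    ∀ k : ℕ, psi m n Gl Gu (x k) (d k) ≤ (1 / (1 + σ)) * psi m n Gl Gu (x k) (vv (x k)) ∧
      (1 / (1 + σ)) * psi m n Gl Gu (x k) (vv (x k)) < 0 := by
  have hσ : 0 ≤ σ := (hρ.trans hρσ).le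
  have hψv : ∀ k, psi m n Gl Gu (x k) (vv (x k)) < 0 := fun k =>
    psi_neg_of_minimizer (hvmin (x k)) (hvne k)
  have hc : 0 < 1 / (1 + σ) := by positivity
  intro k
  induction k with
  | zero =>
    refine ⟨?_, mul_neg_of_pos_of_neg hc (hψv 0)⟩
    rw [hd0, one_div_mul_eq_div, le_div_iff₀ (by linarith)]
    nlinarith [hψv 0]
  | succ k ih =>
    refine ⟨?_, mul_neg_of_pos_of_neg hc (hψv (k + 1))⟩
    have hp : psi m n Gl Gu (x k) (d k) < 0 := ih.1.trans_lt ih.2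
    have hq : psi m n Gl Gu (x (k+1)) (d k) ≤ -(σ * psi m n Gl Gu (x k) (d k)) := by
      have hwolfe := (hw k).2
      rw [← hx k, abs_of_neg hp, mul_neg] at hwolfe
      exact (le_abs_self _).trans hwolfe
    rw [hdk k]
    exact (psi_add_smul_le _ _ _ (hβ k).1).trans (dy_descent_step hσ (hβ k).1 hq (hβ k).2)

theorem dy_sufficient_descent (m n : ℕ) (hm : 0 < m) (hn : 0 < n)
    (Gl Gu : Fin m → EuclideanSpace ℝ (Fin n) → ℝ)
    (hGl : ∀ i, ContDiff ℝ 1 (Gl i)) (hGu : ∀ i, ContDiff ℝ 1 (Gu i))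
    (hle : ∀ (i : Fin m) (x : EuclideanSpace ℝ (Fin n)), Gl i x ≤ Gu i x)
    (vv : EuclideanSpace ℝ (Fin n) → EuclideanSpace ℝ (Fin n))
    (hvmin : ∀ y w : EuclideanSpace ℝ (Fin n),
      psi m n Gl Gu y (vv y) + (1/2) * ‖vv y‖^2 ≤ psi m n Gl Gu y w + (1/2) * ‖w‖^2)
    (ρ σ : ℝ) (hρ : 0 < ρ) (hρσ : ρ < σ) (hσ : σ < 1)
    (x d : ℕ → EuclideanSpace ℝ (Fin n)) (t : ℕ → ℝ) (β : ℕ → ℝ)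
    (hx : ∀ k : ℕ, x (k+1) = x k + t k • d k)
    (ht : ∀ k : ℕ, 0 < t k)
    (hd0 : d 0 = vv (x 0))
    (hdk : ∀ k : ℕ, d (k+1) = vv (x (k+1)) + β (k+1) • d k)
    (hvne : ∀ k : ℕ, vv (x k) ≠ 0)
    (hw : ∀ k : ℕ, StrongWolfe m n Gl Gu ρ σ (x k) (d k) (t k))
    (hβ : ∀ k : ℕ, 0 ≤ β (k+1) ∧
      β (k+1) * (psi m n Gl Gu (x (k+1)) (d k) - psi m n Gl Gu (x k) (d k))
        ≤ -psi m n Gl Gu (x (k+1)) (vv (x (k+1)))) :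
    ∀ k : ℕ, psi m n Gl Gu (x k) (d k) ≤ (1 / (1 + σ)) * psi m n Gl Gu (x k) (vv (x k)) ∧
      (1 / (1 + σ)) * psi m n Gl Gu (x k) (vv (x k)) < 0 :=
  dy_sufficient_descent_general m n Gl Gu vv hvmin ρ σ hρ hρσ x d t β hx hd0 hdk hvne hw hβ
end

section
/- (Dai–Yuan global convergence) Assume Assumptions A1 and A2 hold for x⁰, and let 0 ≤ η < (1−σ)/(1+σ). Consider the conjugate gradient iteration with β_k := η·β_k^{DY}, where β_k^{DY} := −ψ_{x^k}(v(x^k)) / (ψ_{x^k}(d^{k−1}) − ψ_{x^{k−1}}(d^{k−1})) for k ≥ 1. If each t_k satisfies the strong Wolfe conditions at x^k along d^k, then liminf_{k→∞} ‖v(x^k)‖ = 0. -/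
/-!
Since `ψ_x` is positively homogeneous, the minimizer satisfies `ψ_x(v(x)) = -‖v(x)‖²`, and the
strong Wolfe curvature condition keeps the Dai–Yuan denominator `ψ_{x_{k+1}}(d_k) - ψ_{x_k}(d_k)`
above `(1 - σ) |ψ_{x_k}(d_k)|`. Induction then gives sufficient descent
`ψ_{x_k}(d_k) ≤ -c ‖v(x_k)‖²`, hence `β_{k+1} ≤ θ ‖v(x_{k+1})‖² / ‖v(x_k)‖²` with `θ < 1`.
If `‖v(x_k)‖ ≥ ε` for all large `k`, the ratio `‖d_k‖ / ‖v(x_k)‖²` therefore stays bounded, and the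
Lipschitz bound on `ψ` together with the curvature condition bounds `t_k |ψ_{x_k}(d_k)|` from
below. The Armijo condition then drives `G̲_1(x_k)` to `-∞`, contradicting A2.
-/

open scoped BigOperators

theorem one_sub_mul_neg_le_sub_of_abs_le {σ p s : ℝ} (hp : p ≤ 0) (hs : |s| ≤ σ * |p|) :
    (1 - σ) * -p ≤ s - p := by
  rw [abs_of_nonpos hp] at hs
  linarith [neg_abs_le s]

theorem mul_le_one_sub_mul_sub_of_abs_le {σ η c p s : ℝ} (hσ : σ < 1) (hη : 0 ≤ η)
    (hcη : η * σ ≤ (1 - σ) * (1 - c)) (hp : p < 0) (hs : |s| ≤ σ * |p|) :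
    η * s ≤ (1 - c) * (s - p) := by
  have hgap := one_sub_mul_neg_le_sub_of_abs_le hp.le hs
  rw [abs_of_neg hp] at hs
  have hσ0 : 0 ≤ σ := nonneg_of_mul_nonneg_left ((abs_nonneg s).trans hs) (neg_pos.2 hp)
  have hc : 0 ≤ 1 - c :=
    nonneg_of_mul_nonneg_right ((mul_nonneg hη hσ0).trans hcη) (sub_pos.2 hσ)
  rcases le_or_gt s 0 with hs0 | hs0
  · have hsp : 0 ≤ s - p := (mul_nonneg (sub_pos.2 hσ).le (neg_nonneg.2 hp.le)).trans hgap
    nlinarith [mul_nonneg hc hsp]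
  · have h1 : (1 - σ) * (η * s) ≤ (1 - σ) * ((1 - c) * (s - p)) := by
      nlinarith [abs_of_pos hs0, mul_nonneg hη hσ0]
    exact le_of_mul_le_mul_left h1 (by linarith)

theorem exists_dy_descent_constant {σ η : ℝ} (hσ0 : 0 ≤ σ) (hσ1 : σ < 1) (hη0 : 0 ≤ η)
    (hη : η < (1 - σ) / (1 + σ)) :
    ∃ c, 0 < c ∧ c ≤ 1 ∧ η * σ ≤ (1 - σ) * (1 - c) ∧ η < (1 - σ) * c := by
  have hσ : 0 < 1 - σ := sub_pos.2 hσ1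
  rw [lt_div_iff₀ (by linarith)] at hη
  -- with `c = 1 - ησ/(1-σ)`, the requirement `η < (1-σ) c` is exactly `η < (1-σ)/(1+σ)`
  refine ⟨1 - η * σ / (1 - σ), ?_, ?_, ?_, ?_⟩
  · rw [sub_pos, div_lt_one hσ]; nlinarith
  · have : 0 ≤ η * σ / (1 - σ) := by positivity
    linarith
  · rw [sub_sub_cancel, mul_div_cancel₀ _ hσ.ne']
  · rw [mul_sub, mul_div_cancel₀ _ hσ.ne']; linarith

theorem le_max_of_le_add_mul {r : ℕ → ℝ} {a θ : ℝ} {K : ℕ} (hθ0 : 0 ≤ θ) (hθ1 : θ < 1)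
    (h : ∀ k ≥ K, r (k + 1) ≤ a + θ * r k) : ∀ k ≥ K, r k ≤ max (r K) (a / (1 - θ)) := by
  intro k hk
  induction k, hk using Nat.le_induction with
  | base => exact le_max_left _ _
  | succ k hk ih =>
    have hθ : 0 < 1 - θ := sub_pos.2 hθ1
    have hfix : a + θ * (a / (1 - θ)) = a / (1 - θ) := by field_simp; ring
    calc r (k + 1) ≤ a + θ * r k := h k hk
      _ ≤ a + θ * max (r K) (a / (1 - θ)) := by gcongr
      _ ≤ max (r K) (a / (1 - θ)) := by
        rcases le_total (r K) (a / (1 - θ)) with hle | hle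
        · rw [max_eq_right hle, hfix]
        · rw [max_eq_left hle]
          nlinarith

theorem not_bddBelow_range_of_le_sub {G : ℕ → ℝ} {δ : ℝ} {K : ℕ} (hδ : 0 < δ)
    (h : ∀ k ≥ K, G (k + 1) ≤ G k - δ) : ¬BddBelow (Set.range G) := by
  have htel : ∀ N : ℕ, G (K + N) ≤ G K - N * δ := by
    intro N
    induction N with
    | zero => simp
    | succ N ih =>
      rw [← add_assoc]
      push_cast
      linarith [h (K + N) (by omega)]
  rintro ⟨C, hC⟩
  obtain ⟨N, hN⟩ := exists_nat_gt ((G K - C) / δ)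
  rw [div_lt_iff₀ hδ] at hN
  linarith [htel N, hC (Set.mem_range_self (K + N))]

theorem liminf_eq_zero_of_frequently_lt {ι : Type*} {f : Filter ι} {u : ι → ℝ}
    (h0 : ∀ i, 0 ≤ u i) (h : ∀ ε > 0, ∃ᶠ i in f, u i < ε) : Filter.liminf u f = 0 := by
  refine le_antisymm (le_of_forall_pos_le_add fun ε hε => ?_) ?_
  · rw [zero_add]
    exact Filter.liminf_le_of_frequently_le ((h ε hε).mono fun i hi => hi.le)
      (Filter.isBoundedUnder_of_eventually_ge (.of_forall h0))
  · exact Filter.le_liminf_of_le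
      (Filter.IsCoboundedUnder.of_frequently_le ((h 1 one_pos).mono fun i hi => hi.le))
      (.of_forall h0)

theorem eq_neg_sq_norm_of_forall_le {E : Type*} [NormedAddCommGroup E] [NormedSpace ℝ E]
    {f : E → ℝ} (hf : ∀ (a : ℝ) (w : E), 0 ≤ a → f (a • w) = a * f w) {v : E}
    (hv : ∀ w, f v + 1 / 2 * ‖v‖ ^ 2 ≤ f w + 1 / 2 * ‖w‖ ^ 2) :
    f v = -‖v‖ ^ 2 := by
  set N := ‖v‖ ^ 2
  have hscale : ∀ a : ℝ, 0 ≤ a → f v + N / 2 ≤ a * f v + a ^ 2 * N / 2 := fun a ha => by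
    have := hv (a • v)
    rw [hf a v ha, norm_smul, Real.norm_of_nonneg ha, mul_pow] at this
    linarith
  have h0 := hscale 0 le_rfl
  rcases (sq_nonneg ‖v‖ : 0 ≤ N).eq_or_lt with hN | hN
  · linarith [hscale 2 zero_le_two]
  · -- `a = -f v / N` minimizes the right-hand side, which then equals `-(f v)² / (2N)`
    have h := hscale (-f v / N) (div_nonneg (by linarith) hN.le)
    rw [show -f v / N * f v + (-f v / N) ^ 2 * N / 2 = -f v ^ 2 / (2 * N) by field_simp; ring,
      le_div_iff₀ (by positivity)] at h
    nlinarith [sq_nonneg (f v + N)]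

section DaiYuan

variable {E : Type*} [NormedAddCommGroup E] [NormedSpace ℝ E]

theorem exists_norm_le_mul_sq_of_beta_le {d v : ℕ → E} {β : ℕ → ℝ} {θ ε : ℝ} {K : ℕ}
    (hθ0 : 0 ≤ θ) (hθ1 : θ < 1) (hε : 0 < ε) (hvK : ∀ k ≥ K, ε ≤ ‖v k‖)
    (hdk : ∀ k, d (k + 1) = v (k + 1) + β (k + 1) • d k) (hβ0 : ∀ k, 0 ≤ β (k + 1))
    (hβ : ∀ k, β (k + 1) * ‖v k‖ ^ 2 ≤ θ * ‖v (k + 1)‖ ^ 2) :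
    ∃ M > 0, ∀ k ≥ K, ‖d k‖ ≤ M * ‖v k‖ ^ 2 := by
  have hvpos : ∀ k ≥ K, 0 < ‖v k‖ ^ 2 := fun k hk => by nlinarith [hvK k hk]
  set r : ℕ → ℝ := fun k => ‖d k‖ / ‖v k‖ ^ 2
  have hr : ∀ k ≥ K, ‖d k‖ = r k * ‖v k‖ ^ 2 := fun k hk => by
    simp only [r, div_mul_cancel₀ _ (hvpos k hk).ne']
  have hrec : ∀ k ≥ K, r (k + 1) ≤ 1 / ε + θ * r k := fun k hk => by
    have hk' : K ≤ k + 1 := hk.trans k.le_succ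
    have hnorm : ‖d (k + 1)‖ ≤ ‖v (k + 1)‖ + β (k + 1) * ‖d k‖ := by
      rw [hdk]
      refine (norm_add_le _ _).trans_eq ?_
      rw [norm_smul, Real.norm_of_nonneg (hβ0 k)]
    have hv' : ‖v (k + 1)‖ ≤ ‖v (k + 1)‖ ^ 2 / ε := by
      rw [le_div_iff₀ hε]
      nlinarith [hvK _ hk']
    have hβd : β (k + 1) * ‖d k‖ ≤ θ * r k * ‖v (k + 1)‖ ^ 2 := by
      rw [hr k hk]
      nlinarith [hβ k, (div_nonneg (norm_nonneg _) (hvpos k hk).le : 0 ≤ r k)]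
    rw [div_le_iff₀ (hvpos _ hk'), add_mul, div_mul_eq_mul_div, one_mul]
    linarith
  refine ⟨max (r K) (1 / ε / (1 - θ)), lt_max_of_lt_right (by have := sub_pos.2 hθ1; positivity),
    fun k hk => ?_⟩
  rw [hr k hk]
  exact mul_le_mul_of_nonneg_right (le_max_of_le_add_mul hθ0 hθ1 hrec k hk) (hvpos k hk).le

/-- `p k` and `s k` stand for `ψ_{x_k}(d_k)` and `ψ_{x_{k+1}}(d_k)`, and `G` for one objective
along the iterates. -/
theorem frequently_norm_lt_of_dy {d v : ℕ → E} {β t p s G : ℕ → ℝ} {ρ σ η c L : ℝ}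
    (hρ : 0 < ρ) (hc : 0 < c) (hL : 0 < L) (hη0 : 0 ≤ η) (hηc : η < (1 - σ) * c)
    (ht : ∀ k, 0 < t k) (hv : ∀ k, v k ≠ 0)
    (hdk : ∀ k, d (k + 1) = v (k + 1) + β (k + 1) • d k)
    (hβ : ∀ k, β (k + 1) = η * (‖v (k + 1)‖ ^ 2 / (s k - p k)))
    (hdesc : ∀ k, p k ≤ -(c * ‖v k‖ ^ 2)) (hcurv : ∀ k, |s k| ≤ σ * |p k|)
    (hlip : ∀ k, s k ≤ p k + 2 * L * t k * ‖d k‖ ^ 2)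
    (hG : ∀ k, G (k + 1) ≤ G k + ρ * t k * p k) (hGbdd : BddBelow (Set.range G)) :
    ∀ ε > 0, ∃ᶠ k in Filter.atTop, ‖v k‖ < ε := by
  intro ε hε
  by_contra hfreq
  obtain ⟨K, hK⟩ := Filter.eventually_atTop.1 (Filter.not_frequently.1 hfreq)
  have hσ : 0 < 1 - σ := pos_of_mul_pos_left (hη0.trans_lt hηc) hc.le
  have hvsq : ∀ k, 0 < ‖v k‖ ^ 2 := fun k => by have := norm_pos_iff.2 (hv k); positivity
  have hp : ∀ k, p k < 0 := fun k => (hdesc k).trans_lt (by nlinarith [hvsq k])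
  have hgap : ∀ k, (1 - σ) * (c * ‖v k‖ ^ 2) ≤ s k - p k := fun k =>
    (one_sub_mul_neg_le_sub_of_abs_le (hp k).le (hcurv k)).trans'
      (mul_le_mul_of_nonneg_left (by linarith [hdesc k]) hσ.le)
  have hgap_pos : ∀ k, 0 < s k - p k := fun k =>
    (mul_pos hσ (mul_pos hc (hvsq k))).trans_le (hgap k)
  have hβ0 : ∀ k, 0 ≤ β (k + 1) := fun k => by
    rw [hβ]; exact mul_nonneg hη0 (div_nonneg (hvsq _).le (hgap_pos k).le)
  have hβle : ∀ k, β (k + 1) * ‖v k‖ ^ 2 ≤ η / ((1 - σ) * c) * ‖v (k + 1)‖ ^ 2 := fun k => by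
    have h : ‖v (k + 1)‖ ^ 2 / (s k - p k) * ‖v k‖ ^ 2 ≤ ‖v (k + 1)‖ ^ 2 / ((1 - σ) * c) := by
      rw [div_mul_eq_mul_div, div_le_div_iff₀ (hgap_pos k) (by positivity)]
      nlinarith [mul_le_mul_of_nonneg_left (hgap k) (hvsq (k + 1)).le]
    calc β (k + 1) * ‖v k‖ ^ 2 = η * (‖v (k + 1)‖ ^ 2 / (s k - p k) * ‖v k‖ ^ 2) := by
          rw [hβ]; ring
      _ ≤ η * (‖v (k + 1)‖ ^ 2 / ((1 - σ) * c)) := by gcongr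
      _ = η / ((1 - σ) * c) * ‖v (k + 1)‖ ^ 2 := by ring
  obtain ⟨M, hM, hdM⟩ := exists_norm_le_mul_sq_of_beta_le (div_nonneg hη0 (by positivity))
    ((div_lt_one (by positivity)).2 hηc) hε (fun k hk => not_lt.1 (hK k hk)) hdk hβ0 hβle
  set δ := (1 - σ) * c ^ 2 / (2 * L * M ^ 2)
  have hstep : ∀ k ≥ K, δ ≤ t k * -p k := fun k hk => by
    have hpk := neg_pos.2 (hp k)
    have htk := ht k
    have hcurv' : (1 - σ) * -p k ≤ 2 * L * t k * ‖d k‖ ^ 2 :=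
      (one_sub_mul_neg_le_sub_of_abs_le (hp k).le (hcurv k)).trans (by linarith [hlip k])
    have hd : ‖d k‖ ^ 2 ≤ M ^ 2 * (‖v k‖ ^ 2) ^ 2 := by
      rw [← mul_pow]; exact pow_le_pow_left₀ (norm_nonneg _) (hdM k hk) 2
    have hpv : c ^ 2 * (‖v k‖ ^ 2) ^ 2 ≤ p k ^ 2 := by
      rw [← mul_pow, ← neg_sq (p k)]
      exact pow_le_pow_left₀ (mul_pos hc (hvsq k)).le (by linarith [hdesc k]) 2
    rw [div_le_iff₀ (by positivity)]
    refine le_of_mul_le_mul_right ?_ hpk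
    nlinarith [mul_le_mul_of_nonneg_left hcurv' (sq_nonneg c),
      mul_le_mul_of_nonneg_left hd (by positivity : (0 : ℝ) ≤ 2 * L * t k * c ^ 2),
      mul_le_mul_of_nonneg_left hpv (by positivity : (0 : ℝ) ≤ 2 * L * t k * M ^ 2)]
  exact not_bddBelow_range_of_le_sub (mul_pos hρ (by positivity : 0 < δ))
    (fun k hk => by nlinarith [hG k, mul_le_mul_of_nonneg_left (hstep k hk) hρ.le]) hGbdd

end DaiYuan

section Psi

variable {m n : ℕ}

local notation "ℝⁿ" => EuclideanSpace ℝ (Fin n)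

noncomputable def psiTerm (F H : ℝⁿ → ℝ) (x v : ℝⁿ) : ℝ :=
  (1 / 2 : ℝ) *
    ((∑ j : Fin n, (glo n F H x j + ghi n F H x j) * v j) +
     (∑ j : Fin n, (ghi n F H x j - glo n F H x j) * |v j|))

theorem psi_eq_iSup (Gl Gu : Fin m → ℝⁿ → ℝ) (x v : ℝⁿ) :
    psi m n Gl Gu x v = ⨆ i, psiTerm (Gl i) (Gu i) x v := rfl

theorem psiTerm_smul (F H : ℝⁿ → ℝ) (x v : ℝⁿ) {a : ℝ} (ha : 0 ≤ a) :
    psiTerm F H x (a • v) = a * psiTerm F H x v := by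
  simp only [psiTerm, PiLp.smul_apply, smul_eq_mul, abs_mul, abs_of_nonneg ha, mul_left_comm _ a,
    ← Finset.mul_sum]
  ring

theorem psiTerm_add_le (F H : ℝⁿ → ℝ) (x u w : ℝⁿ) :
    psiTerm F H x (u + w) ≤ psiTerm F H x u + psiTerm F H x w := by
  have hwidth : ∀ j, 0 ≤ ghi n F H x j - glo n F H x j := fun j => sub_nonneg.2 min_le_max
  calc psiTerm F H x (u + w)
      ≤ (1 / 2 : ℝ) * ((∑ j : Fin n, (glo n F H x j + ghi n F H x j) * (u j + w j)) +
          (∑ j : Fin n, (ghi n F H x j - glo n F H x j) * (|u j| + |w j|))) := by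
        simp only [psiTerm, PiLp.add_apply]
        gcongr with j
        · exact hwidth j
        · exact abs_add_le _ _
    _ = psiTerm F H x u + psiTerm F H x w := by
        simp only [psiTerm, mul_add, Finset.sum_add_distrib]
        ring

theorem psi_smul (Gl Gu : Fin m → ℝⁿ → ℝ) (x v : ℝⁿ) {a : ℝ} (ha : 0 ≤ a) :
    psi m n Gl Gu x (a • v) = a * psi m n Gl Gu x v := by
  simp only [psi_eq_iSup, psiTerm_smul _ _ _ _ ha, Real.mul_iSup_of_nonneg ha]

theorem psiTerm_le_psi (Gl Gu : Fin m → ℝⁿ → ℝ) (i : Fin m) (x v : ℝⁿ) :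
    psiTerm (Gl i) (Gu i) x v ≤ psi m n Gl Gu x v :=
  le_ciSup (f := fun i => psiTerm (Gl i) (Gu i) x v) (Set.finite_range _).bddAbove i

noncomputable def absVec (v : ℝⁿ) : ℝⁿ := WithLp.toLp 2 fun j => |v j|

theorem norm_absVec (v : ℝⁿ) : ‖absVec v‖ = ‖v‖ := by
  simp [EuclideanSpace.norm_eq, absVec]

theorem psiTerm_eq_inner (F H : ℝⁿ → ℝ) (x v : ℝⁿ) :
    psiTerm F H x v = (1 / 2 : ℝ) * (inner ℝ (gloVec n F H x + ghiVec n F H x) v +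
      inner ℝ (ghiVec n F H x - gloVec n F H x) (absVec v)) := by
  simp [psiTerm, PiLp.inner_apply, gloVec, ghiVec, absVec, mul_comm]

theorem psiTerm_le_add_norm_sub (F H : ℝⁿ → ℝ) (p q d : ℝⁿ) :
    psiTerm F H p d ≤ psiTerm F H q d +
      (‖gloVec n F H p - gloVec n F H q‖ + ‖ghiVec n F H p - ghiVec n F H q‖) * ‖d‖ := by
  set Δl := gloVec n F H p - gloVec n F H q
  set Δh := ghiVec n F H p - ghiVec n F H q
  have hsum : inner ℝ (Δl + Δh) d ≤ (‖Δl‖ + ‖Δh‖) * ‖d‖ :=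
    (real_inner_le_norm _ _).trans (mul_le_mul_of_nonneg_right (norm_add_le _ _) (norm_nonneg _))
  have hdiff : inner ℝ (Δh - Δl) (absVec d) ≤ (‖Δl‖ + ‖Δh‖) * ‖d‖ := by
    rw [add_comm, ← norm_absVec d]
    exact (real_inner_le_norm _ _).trans
      (mul_le_mul_of_nonneg_right (norm_sub_le _ _) (norm_nonneg _))
  have e1 : gloVec n F H p + ghiVec n F H p = gloVec n F H q + ghiVec n F H q + (Δl + Δh) := by
    simp only [Δl, Δh]; abel
  have e2 : ghiVec n F H p - gloVec n F H p = ghiVec n F H q - gloVec n F H q + (Δh - Δl) := by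
    simp only [Δl, Δh]; abel
  rw [psiTerm_eq_inner, psiTerm_eq_inner, e1, e2, inner_add_left _ (Δl + Δh),
    inner_add_left _ (Δh - Δl)]
  linarith

variable [NeZero m]

theorem psi_le_of_forall {Gl Gu : Fin m → ℝⁿ → ℝ} {x v : ℝⁿ} {a : ℝ}
    (h : ∀ i, psiTerm (Gl i) (Gu i) x v ≤ a) : psi m n Gl Gu x v ≤ a :=
  ciSup_le h

theorem psi_add_le (Gl Gu : Fin m → ℝⁿ → ℝ) (x u w : ℝⁿ) :
    psi m n Gl Gu x (u + w) ≤ psi m n Gl Gu x u + psi m n Gl Gu x w :=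
  psi_le_of_forall fun i => (psiTerm_add_le _ _ x u w).trans <|
    add_le_add (psiTerm_le_psi Gl Gu i x u) (psiTerm_le_psi Gl Gu i x w)

theorem psi_le_add_of_lipschitz {Gl Gu : Fin m → ℝⁿ → ℝ} {L : ℝ} {p q : ℝⁿ}
    (h : ∀ i, ‖gloVec n (Gl i) (Gu i) p - gloVec n (Gl i) (Gu i) q‖ ≤ L * ‖p - q‖ ∧
      ‖ghiVec n (Gl i) (Gu i) p - ghiVec n (Gl i) (Gu i) q‖ ≤ L * ‖p - q‖) (d : ℝⁿ) :
    psi m n Gl Gu p d ≤ psi m n Gl Gu q d + 2 * L * ‖p - q‖ * ‖d‖ :=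
  psi_le_of_forall fun i => by
    have hd := norm_nonneg d
    have := psiTerm_le_add_norm_sub (Gl i) (Gu i) p q d
    have := psiTerm_le_psi Gl Gu i q d
    nlinarith [h i]

end Psi

section IntervalDaiYuan

variable {m n : ℕ} {Gl Gu : Fin m → EuclideanSpace ℝ (Fin n) → ℝ}

local notation "ℝⁿ" => EuclideanSpace ℝ (Fin n)

local notation "ψ" => psi m n Gl Gu

theorem AssumptionA1.exists_psi_le_add [NeZero m] {x0 : ℝⁿ}
    (hA1 : AssumptionA1 m n Gl Gu x0) :
    ∃ L > 0, ∀ y ∈ LevelSet m n Gl Gu x0, ∀ z ∈ LevelSet m n Gl Gu x0, ∀ d,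
      ψ y d ≤ ψ z d + 2 * L * ‖y - z‖ * ‖d‖ := by
  choose L hL0 hL using hA1
  refine ⟨∑ i, L i, Finset.sum_pos (fun i _ => hL0 i) Finset.univ_nonempty,
    fun y hy z hz => psi_le_add_of_lipschitz fun i => ?_⟩
  have hLi : L i * ‖y - z‖ ≤ (∑ i, L i) * ‖y - z‖ := mul_le_mul_of_nonneg_right
    (Finset.single_le_sum (fun j _ => (hL0 j).le) (Finset.mem_univ i)) (norm_nonneg _)
  exact ⟨(hL i y hy z hz).1.trans hLi, (hL i y hy z hz).2.trans hLi⟩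

theorem mem_levelSet_of_antitone {x : ℕ → ℝⁿ}
    (h : ∀ k i, Gl i (x (k + 1)) ≤ Gl i (x k) ∧ Gu i (x (k + 1)) ≤ Gu i (x k)) :
    ∀ k, x k ∈ LevelSet m n Gl Gu (x 0) := by
  intro k
  induction k with
  | zero => exact fun i => ⟨le_rfl, le_rfl⟩
  | succ k ih => exact fun i => ⟨(h k i).1.trans (ih i).1, (h k i).2.trans (ih i).2⟩

theorem dy_sufficient_descent_s13 [NeZero m] {x d v : ℕ → ℝⁿ} {β : ℕ → ℝ} {σ η c : ℝ}
    (hσ : σ < 1) (hη : 0 ≤ η) (hc0 : 0 < c) (hc1 : c ≤ 1) (hcη : η * σ ≤ (1 - σ) * (1 - c))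
    (hv : ∀ k, ψ (x k) (v k) = -‖v k‖ ^ 2) (hv0 : ∀ k, v k ≠ 0)
    (hd0 : d 0 = v 0) (hdk : ∀ k, d (k + 1) = v (k + 1) + β (k + 1) • d k)
    (hβ : ∀ k, β (k + 1) = η * (‖v (k + 1)‖ ^ 2 / (ψ (x (k + 1)) (d k) - ψ (x k) (d k))))
    (hcurv : ∀ k, |ψ (x (k + 1)) (d k)| ≤ σ * |ψ (x k) (d k)|) :
    ∀ k, ψ (x k) (d k) ≤ -(c * ‖v k‖ ^ 2) := by
  intro k
  induction k with
  | zero =>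
    rw [hd0, hv]
    nlinarith [sq_nonneg ‖v 0‖]
  | succ k ih =>
    set p := ψ (x k) (d k)
    set s := ψ (x (k + 1)) (d k)
    have hp : p < 0 :=
      ih.trans_lt (neg_neg_of_pos (by have := norm_pos_iff.2 (hv0 k); positivity))
    have hgap : 0 < s - p := (mul_pos (sub_pos.2 hσ) (neg_pos.2 hp)).trans_le
      (one_sub_mul_neg_le_sub_of_abs_le hp.le (hcurv k))
    have hβ0 : 0 ≤ β (k + 1) := by rw [hβ]; positivity
    have hβs : β (k + 1) * s ≤ (1 - c) * ‖v (k + 1)‖ ^ 2 := by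
      have hratio : η * s / (s - p) ≤ 1 - c :=
        (div_le_iff₀ hgap).2 (mul_le_one_sub_mul_sub_of_abs_le hσ hη hcη hp (hcurv k))
      calc β (k + 1) * s = ‖v (k + 1)‖ ^ 2 * (η * s / (s - p)) := by rw [hβ]; ring
        _ ≤ ‖v (k + 1)‖ ^ 2 * (1 - c) := by gcongr
        _ = (1 - c) * ‖v (k + 1)‖ ^ 2 := mul_comm _ _
    calc ψ (x (k + 1)) (d (k + 1))
        ≤ ψ (x (k + 1)) (v (k + 1)) + ψ (x (k + 1)) (β (k + 1) • d k) := by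
          rw [hdk]; exact psi_add_le _ _ _ _ _
      _ = -‖v (k + 1)‖ ^ 2 + β (k + 1) * s := by rw [hv, psi_smul _ _ _ _ hβ0]
      _ ≤ -(c * ‖v (k + 1)‖ ^ 2) := by linarith

end IntervalDaiYuan

theorem dy_convergence_general (m n : ℕ) (hm : 0 < m)
    (Gl Gu : Fin m → EuclideanSpace ℝ (Fin n) → ℝ)
    (vv : EuclideanSpace ℝ (Fin n) → EuclideanSpace ℝ (Fin n))
    (hvmin : ∀ y w : EuclideanSpace ℝ (Fin n),
      psi m n Gl Gu y (vv y) + (1/2) * ‖vv y‖^2 ≤ psi m n Gl Gu y w + (1/2) * ‖w‖^2)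
    (ρ σ : ℝ) (hρ : 0 < ρ) (hρσ : ρ < σ) (hσ : σ < 1)
    (x d : ℕ → EuclideanSpace ℝ (Fin n)) (t : ℕ → ℝ) (β : ℕ → ℝ)
    (hx : ∀ k : ℕ, x (k+1) = x k + t k • d k)
    (ht : ∀ k : ℕ, 0 < t k)
    (hd0 : d 0 = vv (x 0))
    (hdk : ∀ k : ℕ, d (k+1) = vv (x (k+1)) + β (k+1) • d k)
    (hvne : ∀ k : ℕ, vv (x k) ≠ 0)
    (η : ℝ) (hη0 : 0 ≤ η) (hη1 : η < (1 - σ) / (1 + σ))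
    (hA1 : AssumptionA1 m n Gl Gu (x 0))
    (hA2 : AssumptionA2 m n Gl Gu (x 0))
    (hβ : ∀ k : ℕ, β (k+1) =
      η * (-psi m n Gl Gu (x (k+1)) (vv (x (k+1))) /
        (psi m n Gl Gu (x (k+1)) (d k) - psi m n Gl Gu (x k) (d k))))
    (hw : ∀ k : ℕ, StrongWolfe m n Gl Gu ρ σ (x k) (d k) (t k)) :
    Filter.liminf (fun k : ℕ => ‖vv (x k)‖) Filter.atTop = 0 := by
  have : NeZero m := ⟨hm.ne'⟩
  set p := fun k => psi m n Gl Gu (x k) (d k)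
  have hv : ∀ k, psi m n Gl Gu (x k) (vv (x k)) = -‖vv (x k)‖ ^ 2 := fun k =>
    eq_neg_sq_norm_of_forall_le (fun a w ha => psi_smul Gl Gu _ w ha) (hvmin (x k))
  have hβ' : ∀ k, β (k + 1) = η * (‖vv (x (k + 1))‖ ^ 2 /
      (psi m n Gl Gu (x (k + 1)) (d k) - p k)) := fun k => by rw [hβ, hv, neg_neg]
  have hcurv : ∀ k, |psi m n Gl Gu (x (k + 1)) (d k)| ≤ σ * |p k| := fun k => hx k ▸ (hw k).2
  obtain ⟨c, hc0, hc1, hcη, hηc⟩ := exists_dy_descent_constant (hρ.trans hρσ).le hσ hη0 hη1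
  have hdesc := dy_sufficient_descent_s13 hσ hη0 hc0 hc1 hcη hv hvne hd0 hdk hβ' hcurv
  have harmijo : ∀ k i, Gl i (x (k + 1)) ≤ Gl i (x k) + ρ * t k * p k ∧
      Gu i (x (k + 1)) ≤ Gu i (x k) + ρ * t k * p k := fun k i => hx k ▸ (hw k).1 i
  have hdecr : ∀ k, ρ * t k * p k ≤ 0 := fun k => mul_nonpos_of_nonneg_of_nonpos
    (mul_pos hρ (ht k)).le ((hdesc k).trans (neg_nonpos.2 (by positivity)))
  have hmono : ∀ k i, Gl i (x (k + 1)) ≤ Gl i (x k) ∧ Gu i (x (k + 1)) ≤ Gu i (x k) :=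
    fun k i => ⟨by linarith [(harmijo k i).1, hdecr k], by linarith [(harmijo k i).2, hdecr k]⟩
  have hlevel := mem_levelSet_of_antitone hmono
  obtain ⟨L, hL, hlip⟩ := hA1.exists_psi_le_add
  obtain ⟨⟨C, hC⟩, -⟩ := hA2 x hlevel (fun i k => hmono k i) 0
  refine liminf_eq_zero_of_frequently_lt (fun k => norm_nonneg _) <|
    frequently_norm_lt_of_dy hρ hc0 hL hη0 hηc ht hvne hdk hβ' hdesc hcurv (fun k => ?_)
      (fun k => (harmijo k 0).1) ⟨C, by rintro _ ⟨k, rfl⟩; exact hC k⟩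
  have hxstep : ‖x (k + 1) - x k‖ = t k * ‖d k‖ := by
    rw [hx, add_sub_cancel_left, norm_smul, Real.norm_of_nonneg (ht k).le]
  have := hlip _ (hlevel (k + 1)) _ (hlevel k) (d k)
  rw [hxstep] at this
  linarith

theorem dy_convergence (m n : ℕ) (hm : 0 < m) (hn : 0 < n)
    (Gl Gu : Fin m → EuclideanSpace ℝ (Fin n) → ℝ)
    (hGl : ∀ i, ContDiff ℝ 1 (Gl i)) (hGu : ∀ i, ContDiff ℝ 1 (Gu i))
    (hle : ∀ (i : Fin m) (x : EuclideanSpace ℝ (Fin n)), Gl i x ≤ Gu i x)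
    (vv : EuclideanSpace ℝ (Fin n) → EuclideanSpace ℝ (Fin n))
    (hvmin : ∀ y w : EuclideanSpace ℝ (Fin n),
      psi m n Gl Gu y (vv y) + (1/2) * ‖vv y‖^2 ≤ psi m n Gl Gu y w + (1/2) * ‖w‖^2)
    (ρ σ : ℝ) (hρ : 0 < ρ) (hρσ : ρ < σ) (hσ : σ < 1)
    (x d : ℕ → EuclideanSpace ℝ (Fin n)) (t : ℕ → ℝ) (β : ℕ → ℝ)
    (hx : ∀ k : ℕ, x (k+1) = x k + t k • d k)
    (ht : ∀ k : ℕ, 0 < t k)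
    (hd0 : d 0 = vv (x 0))
    (hdk : ∀ k : ℕ, d (k+1) = vv (x (k+1)) + β (k+1) • d k)
    (hvne : ∀ k : ℕ, vv (x k) ≠ 0)
    (η : ℝ) (hη0 : 0 ≤ η) (hη1 : η < (1 - σ) / (1 + σ))
    (hA1 : AssumptionA1 m n Gl Gu (x 0))
    (hA2 : AssumptionA2 m n Gl Gu (x 0))
    (hβ : ∀ k : ℕ, β (k+1) =
      η * (-psi m n Gl Gu (x (k+1)) (vv (x (k+1))) /
        (psi m n Gl Gu (x (k+1)) (d k) - psi m n Gl Gu (x k) (d k))))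
    (hw : ∀ k : ℕ, StrongWolfe m n Gl Gu ρ σ (x k) (d k) (t k)) :
    Filter.liminf (fun k : ℕ => ‖vv (x k)‖) Filter.atTop = 0 :=
  dy_convergence_general m n hm Gl Gu vv hvmin ρ σ hρ hρσ hσ x d t β hx ht hd0 hdk hvne η hη0 hη1
    hA1 hA2 hβ hw
end
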